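/- arXiv:2007.05171 — 2 statements merged into one kernel-verified Lean document; each statement's English description precedes it below -/
import Mathlib

section
/- If a sequence (X_n) in E is uo-convergent to 0 and L¹-uniformly integrable, then p_φ(X_n) → 0 for every φ ∈ Φ (i.e., X_n → 0 in the L¹-topology). -/
variable {E : Type*} [AddCommGroup E] [Lattice E]
  [CovariantClass E E (· + ·) (· ≤ ·)] [Module ℝ E]

/-- `E` is Dedekind complete. -/
def DedekindComplete (E : Type*) [AddCommGroup E] [Lattice E] : Prop :=
  ∀ A : Set E, A.Nonempty → BddAbove A → ∃ s, IsLUB A s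

/-- `e` is a weak order unit. -/
def IsWeakUnit (e : E) : Prop :=
  0 < e ∧ ∀ x : E, 0 ≤ x → IsLUB (Set.range fun n : ℕ => x ⊓ n • e) x

/-- A band (order) projection. -/
def IsBandProj (P : E →ₗ[ℝ] E) : Prop :=
  (∀ x, P (P x) = P x) ∧ ∀ x : E, 0 ≤ x → 0 ≤ P x ∧ P x ≤ x

/-- `P` is the band projection onto the band generated by `u ≥ 0`. -/
def IsProjOnBandGen (P : E →ₗ[ℝ] E) (u : E) : Prop :=
  IsBandProj P ∧ ∀ x : E, 0 ≤ x → IsLUB (Set.range fun n : ℕ => x ⊓ n • u) (P x)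

/-- A conditional expectation with respect to the weak order unit `e`. -/
def IsCondExp (e : E) (F : E →ₗ[ℝ] E) : Prop :=
  (∀ x, F (F x) = F x) ∧ (∀ x : E, 0 < x → 0 < F x) ∧ F e = e ∧
  ∀ V : ℕ → E, Antitone V → IsGLB (Set.range V) 0 →
    IsGLB (Set.range fun n => F (V n)) 0

/-- A positive, normalized, (sequentially) order continuous functional. -/
def IsNormedFunctional (e : E) (φ : E →ₗ[ℝ] ℝ) : Prop :=
  (∀ x : E, 0 ≤ x → 0 ≤ φ x) ∧ φ e = 1 ∧
  ∀ V : ℕ → E, Antitone V → IsGLB (Set.range V) 0 →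
    Filter.Tendsto (fun n => φ (V n)) Filter.atTop (nhds 0)

/-- `Φ` is a separating family of normalized positive order continuous functionals. -/
def IsSeparatingFamily (e : E) (Φ : Set (E →ₗ[ℝ] ℝ)) : Prop :=
  (∀ φ ∈ Φ, IsNormedFunctional e φ) ∧ ∀ x : E, (∀ φ ∈ Φ, φ x = 0) → x = 0

/-- The sequence `X` is `L¹`-uniformly integrable with respect to the family of band
projections `P n l` (the projection onto the band generated by `(|X n| - l • e)⁺`). -/
def UnifInt (F : E →ₗ[ℝ] E) (Φ : Set (E →ₗ[ℝ] ℝ)) (X : ℕ → E)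
    (P : ℕ → ℝ → (E →ₗ[ℝ] E)) : Prop :=
  ∀ φ ∈ Φ, ∀ ε : ℝ, 0 < ε → ∃ l₀ : ℝ, ∀ l : ℝ, l₀ ≤ l → ∀ n : ℕ,
    φ (F (P n l |X n|)) < ε

/-- Order convergence of a sequence to `0`. -/
def OrdConvZero (Y : ℕ → E) : Prop :=
  ∃ V : ℕ → E, Antitone V ∧ IsGLB (Set.range V) 0 ∧ ∀ n, |Y n| ≤ V n

/-- Unbounded order convergence of a sequence to `x`. -/
def UoConv (X : ℕ → E) (x : E) : Prop :=
  ∀ Z : E, 0 ≤ Z → OrdConvZero (fun n => |X n - x| ⊓ Z)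

private lemma lattice_decomp {E : Type*} [AddCommGroup E] [Lattice E]
    [CovariantClass E E (· + ·) (· ≤ ·)] (a b : E) :
    (a - b) ⊔ 0 + a ⊓ b = a := by
  have h1 : a ⊓ b + a ⊔ b = a + b := inf_add_sup a b
  have h2 : (a - b) ⊔ 0 = a ⊔ b - b := by
    have := add_sup a b (-b)
    simp only [neg_add_cancel] at this
    rw [sub_eq_neg_add, sub_eq_neg_add, this, sup_comm]
  rw [h2, sub_add_eq_add_sub, add_comm (a ⊔ b), h1]
  abel

/-- A uo-null, `L¹`-uniformly integrable sequence converges to `0` in `L¹`. -/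
theorem uo_null_unifInt_tendsto_zero
    (hE : DedekindComplete E) (e : E) (he : IsWeakUnit e)
    (F : E →ₗ[ℝ] E) (hF : IsCondExp e F)
    (Φ : Set (E →ₗ[ℝ] ℝ)) (hΦ : IsSeparatingFamily e Φ)
    (X : ℕ → E) (P : ℕ → ℝ → (E →ₗ[ℝ] E))
    (hP : ∀ n l, IsProjOnBandGen (P n l) ((|X n| - l • e) ⊔ 0))
    (huo : UoConv X 0) (hui : UnifInt F Φ X P) :
    ∀ φ ∈ Φ, Filter.Tendsto (fun n => φ (F |X n|)) Filter.atTop (nhds 0) := by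
  obtain ⟨hFid, hFpos, hFe, hFoc⟩ := hF
  intro φ hφ
  obtain ⟨hφpos, hφe, hφoc⟩ := hΦ.1 φ hφ
  have hFnonneg : ∀ x : E, 0 ≤ x → 0 ≤ F x := by
    intro x hx
    rcases hx.eq_or_lt with h | h
    · rw [← h, map_zero]
    · exact (hFpos x h).le
  have hFmono : ∀ x y : E, x ≤ y → F x ≤ F y := by
    intro x y hxy
    have := hFnonneg (y - x) (sub_nonneg.2 hxy)
    rw [map_sub] at this
    exact sub_nonneg.1 this
  have hφmono : ∀ x y : E, x ≤ y → φ x ≤ φ y := by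
    intro x y hxy
    have := hφpos (y - x) (sub_nonneg.2 hxy)
    rw [map_sub] at this
    linarith
  rw [Metric.tendsto_atTop]
  intro ε hε
  obtain ⟨l₀, hl₀⟩ := hui φ hφ (ε / 2) (by linarith)
  set l : ℝ := (⌈max l₀ 0⌉₊ : ℝ) with hl
  have hll₀ : l₀ ≤ l := le_trans (le_max_left _ _) (Nat.le_ceil _)
  have hle : (0 : E) ≤ l • e := by
    rw [hl, Nat.cast_smul_eq_nsmul]
    exact nsmul_nonneg he.1.le _
  obtain ⟨V, hVanti, hVglb, hVb⟩ := huo (l • e) hle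
  -- key pointwise bound
  have key : ∀ n, φ (F |X n|) ≤ φ (F ((P n l) |X n|)) + φ (F (V n)) := by
    intro n
    set x : E := |X n| with hx
    set u : E := (x - l • e) ⊔ 0 with hu
    set w : E := x ⊓ l • e with hw
    have hxnn : 0 ≤ x := abs_nonneg _
    have hunn : 0 ≤ u := le_sup_right
    have hwnn : 0 ≤ w := le_inf hxnn hle
    have hdecomp : u + w = x := lattice_decomp x (l • e)
    -- P n l fixes u
    have hPu : (P n l) u = u := by
      have hlub := (hP n l).2 u hunn
      have hlub' : IsLUB (Set.range fun k : ℕ => u ⊓ k • ((|X n| - l • e) ⊔ 0)) u := by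
        constructor
        · rintro _ ⟨k, rfl⟩
          exact inf_le_left
        · intro b hb
          have : u ⊓ (1 : ℕ) • ((|X n| - l • e) ⊔ 0) ≤ b := hb ⟨1, rfl⟩
          rwa [one_nsmul, ← hx, ← hu, inf_idem] at this
      exact hlub.unique hlub'
    have hPw := ((hP n l).1.2 w hwnn)
    have hrem : x - (P n l) x ≤ w := by
      have : x - (P n l) x = (u - (P n l) u) + (w - (P n l) w) := by
        rw [← hdecomp, map_add]; abel
      rw [this, hPu, sub_self, zero_add]
      calc w - (P n l) w ≤ w - 0 := by
            exact sub_le_sub_left hPw.1 w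
        _ = w := sub_zero w
    have hwV : w ≤ V n := by
      have := hVb n
      simp only [sub_zero] at this
      rwa [abs_of_nonneg (le_inf (abs_nonneg _) hle)] at this
    have h1 : φ (F (x - (P n l) x)) ≤ φ (F (V n)) :=
      hφmono _ _ (hFmono _ _ (le_trans hrem hwV))
    have h2 : φ (F x) = φ (F ((P n l) x)) + φ (F (x - (P n l) x)) := by
      rw [← map_add, ← map_add, add_sub_cancel]
    rw [h2]
    linarith
  -- tail control
  have hFV : Filter.Tendsto (fun n => φ (F (V n))) Filter.atTop (nhds 0) := by
    refine hφoc (fun n => F (V n)) (fun m n hmn => hFmono _ _ (hVanti hmn)) ?_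
    exact hFoc V hVanti hVglb
  rw [Metric.tendsto_atTop] at hFV
  obtain ⟨N, hN⟩ := hFV (ε / 2) (by linarith)
  refine ⟨N, fun n hn => ?_⟩
  have hP2 := hl₀ l hll₀ n
  have hVsmall := hN n hn
  rw [Real.dist_eq, sub_zero] at hVsmall ⊢
  have hnn : 0 ≤ φ (F |X n|) := hφpos _ (hFnonneg _ (abs_nonneg _))
  have hVle : φ (F (V n)) < ε / 2 := lt_of_abs_lt hVsmall
  rw [abs_of_nonneg hnn]
  have := key n
  linarith
end

section
/- If a sequence (X_n) in E is uo-convergent to X ∈ E and (X_n) is L¹-uniformly integrable, then p_φ(X_n − X) → 0 for every φ ∈ Φ, i.e., X_n converges to X in L¹. -/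
variable {E : Type*} [AddCommGroup E] [Lattice E]
  [CovariantClass E E (· + ·) (· ≤ ·)] [Module ℝ E]

/-- A uo-convergent, `L¹`-uniformly integrable sequence converges in `L¹` to its
uo-limit. -/
theorem uo_unifInt_tendsto_L1
    (hE : DedekindComplete E) (e : E) (he : IsWeakUnit e)
    (F : E →ₗ[ℝ] E) (hF : IsCondExp e F)
    (Φ : Set (E →ₗ[ℝ] ℝ)) (hΦ : IsSeparatingFamily e Φ)
    (X : ℕ → E) (x : E) (P : ℕ → ℝ → (E →ₗ[ℝ] E))
    (hP : ∀ n l, IsProjOnBandGen (P n l) ((|X n| - l • e) ⊔ 0))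
    (huo : UoConv X x) (hui : UnifInt F Φ X P) :
    ∀ φ ∈ Φ, Filter.Tendsto (fun n => φ (F |X n - x|)) Filter.atTop (nhds 0) := by
  intro φ hφ
  obtain ⟨hφpos, -, hφoc⟩ := hΦ.1 φ hφ
  -- positivity and monotonicity of `F`
  have hFpos : ∀ y : E, 0 ≤ y → 0 ≤ F y := by
    intro y hy
    rcases hy.lt_or_eq with h | h
    · exact (hF.2.1 y h).le
    · rw [← h, map_zero]
  have hFmono : ∀ a b : E, a ≤ b → F a ≤ F b := by
    intro a b hab
    have h := hFpos (b - a) (sub_nonneg.2 hab)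
    rw [map_sub] at h
    exact sub_nonneg.1 h
  have hφF : ∀ a b : E, a ≤ b → φ (F a) ≤ φ (F b) := by
    intro a b hab
    have h1 : (0 : E) ≤ F b - F a := sub_nonneg.2 (hFmono a b hab)
    have h2 := hφpos _ h1
    rw [map_sub] at h2
    linarith
  rw [Metric.tendsto_atTop]
  intro ε hε
  obtain ⟨l₀, hl₀⟩ := hui φ hφ (ε / 2) (by linarith)
  obtain ⟨m, hm⟩ := exists_nat_ge l₀
  set l : ℝ := (m : ℝ) with hl
  have hle : (0 : E) ≤ l • e := by
    rw [hl, Nat.cast_smul_eq_nsmul]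
    exact nsmul_nonneg he.1.le m
  set Z : E := l • e + |x| with hZdef
  have hZ0 : (0 : E) ≤ Z := add_nonneg hle (abs_nonneg x)
  obtain ⟨V, hVanti, hVglb, hVle⟩ := huo Z hZ0
  have hFVglb := hF.2.2.2 V hVanti hVglb
  have hFVanti : Antitone fun n => F (V n) := fun a b hab => hFmono _ _ (hVanti hab)
  have hφV := hφoc (fun n => F (V n)) hFVanti hFVglb
  obtain ⟨N, hN⟩ := (Metric.tendsto_atTop.1 hφV) (ε / 2) (by linarith)
  refine ⟨N, fun n hn => ?_⟩
  set a : E := |X n - x| with hadef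
  have ha0 : (0 : E) ≤ a := abs_nonneg _
  -- the splitting  a = a ⊓ Z + (a - Z)⁺
  have hsub : a - a ⊓ Z = (a - Z) ⊔ 0 := by rw [sub_inf, sub_self, sup_comm]
  have hsplit : a = a ⊓ Z + ((a - Z) ⊔ 0) := sub_eq_iff_eq_add'.1 hsub
  -- first term bounded by V n
  have h1 : φ (F (a ⊓ Z)) ≤ φ (F (V n)) := by
    apply hφF
    have h := hVle n
    rwa [abs_of_nonneg (le_inf ha0 hZ0)] at h
  -- second term bounded using uniform integrability
  set u : E := (|X n| - l • e) ⊔ 0 with hudef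
  have hu0 : (0 : E) ≤ u := le_sup_right
  have habs : |X n - x| ≤ |X n| + |x| := by
    calc |X n - x| = |X n + -x| := by rw [sub_eq_add_neg]
      _ ≤ |X n| + |(-x)| := abs_add_le _ _
      _ = |X n| + |x| := by rw [abs_neg]
  have h2a : (a - Z) ⊔ 0 ≤ u := by
    apply sup_le_sup_right
    have h := sub_le_sub_right habs Z
    calc a - Z ≤ |X n| + |x| - Z := h
      _ = |X n| - l • e := by rw [hZdef]; abel
  obtain ⟨⟨hPidem, hPpos⟩, hPlub⟩ := hP n l
  have hPu : P n l u = u := by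
    have hlub := hPlub u hu0
    have hlub' : IsLUB (Set.range fun k : ℕ => u ⊓ k • u) u := by
      constructor
      · rintro _ ⟨k, rfl⟩; exact inf_le_left
      · intro b hb
        have hmem : u ∈ Set.range fun k : ℕ => u ⊓ k • u := ⟨1, by simp⟩
        exact hb hmem
    exact hlub.unique hlub'
  have huXn : u ≤ |X n| := sup_le (sub_le_self _ hle) (abs_nonneg _)
  have hPle : u ≤ P n l |X n| := by
    have h := (hPpos (|X n| - u) (sub_nonneg.2 huXn)).1
    rw [map_sub, hPu] at h
    exact sub_nonneg.1 h
  have h2 : φ (F ((a - Z) ⊔ 0)) ≤ φ (F (P n l |X n|)) := hφF _ _ (h2a.trans hPle)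
  have h3 : φ (F (P n l |X n|)) < ε / 2 := hl₀ l hm n
  -- combine
  have hdist : φ (F a) = φ (F (a ⊓ Z)) + φ (F ((a - Z) ⊔ 0)) := by
    conv_lhs => rw [hsplit]
    rw [map_add, map_add]
  have hVn0 : (0 : E) ≤ V n := hVglb.1 ⟨n, rfl⟩
  have hφVn : |φ (F (V n))| < ε / 2 := by
    have h := hN n hn
    rwa [Real.dist_eq, sub_zero] at h
  have hφVn' : φ (F (V n)) < ε / 2 := (le_abs_self _).trans_lt hφVn
  have hfin : φ (F a) < ε := by
    rw [hdist]
    linarith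
  rw [Real.dist_eq, sub_zero, abs_of_nonneg (hφpos _ (hFpos _ ha0))]
  exact hfin
end
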